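/- arXiv:2003.07530 — 4 statements merged into one kernel-verified Lean document; each statement's English description precedes it below -/
import Mathlib

section
/- For all nonnegative integers r, s and every complex number c such that (c−r)_k ≠ 0 for 0 ≤ k ≤ min(r,s) and (c−r)_s ≠ 0, one has Σ_{k=0}^{min(r,s)} C(r,k) · C(s,k) · k! / (c−r)_k = (c)_s / (c−r)_s. -/
/-- The Pochhammer symbol (rising factorial) `(a)ₖ = a(a+1)⋯(a+k−1)`. -/
noncomputable def poch (a : ℂ) (k : ℕ) : ℂ := (ascPochhammer ℂ k).eval a

/-!
Write `x = c - r`. Multiplying by `(x)_s = (x)_k (x + k)_{s-k}` turns the claim into the mixed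
Vandermonde identity `(x + r)_s = ∑_k C(s,k) r(r-1)⋯(r-k+1) (x + k)_{s-k}`, in which the terms
with `k > r` vanish. Since a rising factorial `(y)_n` is the falling factorial of `y + n - 1`,
that identity is the Chu–Vandermonde identity for falling factorials evaluated at `r` and
`x + s - 1`.
-/

open Finset Polynomial

theorem ascPochhammer_add_eval {R : Type*} [CommSemiring R] (x : R) (m n : ℕ) :
    (ascPochhammer R (m + n)).eval x =
      (ascPochhammer R m).eval x * (ascPochhammer R n).eval (x + m) := by
  rw [← ascPochhammer_mul, eval_mul, eval_comp, eval_add, eval_X, eval_natCast]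

theorem ascPochhammer_eval_ne_zero_of_le {R : Type*} [CommSemiring R] {x : R} {m n : ℕ}
    (hmn : m ≤ n) (hn : (ascPochhammer R n).eval x ≠ 0) : (ascPochhammer R m).eval x ≠ 0 := by
  obtain ⟨k, rfl⟩ := Nat.exists_eq_add_of_le hmn
  rw [ascPochhammer_add_eval] at hn
  exact left_ne_zero_of_mul hn

theorem ascPochhammer_eval_add_natCast {R : Type*} [Ring R] (x : R) (r s : ℕ) :
    (ascPochhammer R s).eval (x + r) =
      ∑ k ∈ range (s + 1),
        s.choose k * r.descFactorial k * (ascPochhammer R (s - k)).eval (x + k) := by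
  have h := Ring.descPochhammer_smeval_add (R := R) s (Nat.cast_commute r (x + s - 1))
  rw [descPochhammer_smeval_eq_ascPochhammer, ascPochhammer_smeval_eq_eval,
    Nat.sum_antidiagonal_eq_sum_range_succ
      (fun i j => (s.choose i : R) * ((descPochhammer ℤ i).smeval (r : R) *
        (descPochhammer ℤ j).smeval (x + s - 1)))] at h
  convert h using 2 with k hk
  · abel
  · have hks : k ≤ s := Nat.lt_succ_iff.mp (mem_range.mp hk)
    rw [descPochhammer_smeval_eq_descFactorial, descPochhammer_smeval_eq_ascPochhammer,
      ascPochhammer_smeval_eq_eval, Nat.cast_sub hks, mul_assoc]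
    congr 3
    abel

theorem finite_sum_denominator_param_general (r s : ℕ) (c : ℂ)
    (hcs : poch (c - r) s ≠ 0) :
    ∑ k ∈ Finset.range (min r s + 1),
      (r.choose k : ℂ) * (s.choose k : ℂ) * (k.factorial : ℂ) / poch (c - r) k =
    poch c s / poch (c - r) s := by
  unfold poch at *
  set x := c - r
  rw [eq_div_iff hcs, sum_mul, show c = x + r by ring, ascPochhammer_eval_add_natCast]
  refine sum_subset_zero_on_sdiff (by gcongr; omega) (fun k hk => ?_) (fun k hk => ?_)
  · have hrk : r < k := by simp only [mem_sdiff, mem_range] at hk; omega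
    simp [Nat.descFactorial_eq_zero_iff_lt.mpr hrk]
  · have hks : k ≤ s := by simp only [mem_range] at hk; omega
    have hsplit := ascPochhammer_add_eval x k (s - k)
    rw [Nat.add_sub_cancel' hks] at hsplit
    rw [hsplit, Nat.descFactorial_eq_factorial_mul_choose]
    field_simp [ascPochhammer_eval_ne_zero_of_le hks hcs]
    push_cast
    ring

theorem finite_sum_denominator_param (r s : ℕ) (c : ℂ)
    (hc : ∀ k ≤ min r s, poch (c - r) k ≠ 0) (hcs : poch (c - r) s ≠ 0) :
    ∑ k ∈ Finset.range (min r s + 1),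
      (r.choose k : ℂ) * (s.choose k : ℂ) * (k.factorial : ℂ) / poch (c - r) k =
    poch c s / poch (c - r) s :=
  finite_sum_denominator_param_general r s c hcs
end

section
/- As an identity of formal power series in x: for every nonnegative integer r and complex parameters a, b, c with c and c−r not nonpositive integers, Σ_{k=0}^{r} C(r,k) · ((a)_k (b)_k/((c−r)_k (c)_k)) · x^k · 2F1(a+k, b+k; c+k; x) = 2F1(a, b; c−r; x). -/
/-- The Gauss hypergeometric series `₂F₁(a,b;c;x)` as a formal power series. -/
noncomputable def gauss2F1 (a b c : ℂ) : PowerSeries ℂ :=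
  PowerSeries.mk fun s => poch a s * poch b s / (poch c s * (s.factorial : ℂ))

open Finset

open Polynomial in
theorem descPochhammer_eval_add_eq_sum_range {R : Type*} [CommRing R] (x y : R) (r : ℕ) :
    (descPochhammer R r).eval (x + y) = ∑ k ∈ range (r + 1),
      (r.choose k : R) * ((descPochhammer R k).eval x * (descPochhammer R (r - k)).eval y) := by
  have eval_eq_smeval (m : ℕ) (z : R) :
      (descPochhammer R m).eval z = (descPochhammer ℤ m).smeval z := by
    rw [← descPochhammer_map (Int.castRingHom R), eval_map, ← eval₂_smulOneHom_eq_smeval,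
      Subsingleton.elim (Int.castRingHom R) RingHom.smulOneHom]
  simp only [eval_eq_smeval]
  exact (Ring.descPochhammer_smeval_add r (Commute.all x y)).trans
    (Nat.sum_antidiagonal_eq_sum_range_succ (fun i j => (r.choose i : R) *
      ((descPochhammer ℤ i).smeval x * (descPochhammer ℤ j).smeval y)) r)

open PowerSeries in
theorem PowerSeries.coeff_X_pow_mul_iterate_derivative {R : Type*} [CommSemiring R]
    (f : PowerSeries R) (k n : ℕ) :
    coeff n (X ^ k * (d⁄dX R)^[k] f) = n.descFactorial k * coeff n f := by
  by_cases hkn : k ≤ n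
  · obtain ⟨m, rfl⟩ := Nat.exists_eq_add_of_le' hkn
    rw [coeff_X_pow_mul, coeff_iterate_derivative, Nat.add_descFactorial_eq_ascFactorial]
  · rw [coeff_X_pow_mul', if_neg hkn, Nat.descFactorial_of_lt (not_le.mp hkn), Nat.cast_zero,
      zero_mul]

theorem poch_mul_poch_add (x : ℂ) (k m : ℕ) : poch x k * poch (x + k) m = poch x (k + m) := by
  simpa [poch, Polynomial.eval_comp] using congrArg (Polynomial.eval x) (ascPochhammer_mul ℂ k m)

theorem poch_ne_zero {x : ℂ} (hx : ∀ n : ℕ, x ≠ -n) (k : ℕ) : poch x k ≠ 0 := by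
  rw [poch, ne_eq, ascPochhammer_eval_eq_zero_iff]
  rintro ⟨j, -, hj⟩
  exact hx j (by linear_combination hj)

theorem sum_choose_mul_descPochhammer_mul_poch (r : ℕ) (x d : ℂ) :
    ∑ k ∈ range (r + 1), (r.choose k : ℂ) * ((descPochhammer ℂ k).eval x * poch (d + k) (r - k)) =
      poch (x + d) r := by
  have hdesc (m : ℕ) (z : ℂ) : (descPochhammer ℂ m).eval (z + m - 1) = poch z m := by
    rw [descPochhammer_eval_eq_ascPochhammer, poch]; ring_nf
  rw [← hdesc, show x + d + r - 1 = x + (d + r - 1) by ring, descPochhammer_eval_add_eq_sum_range]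
  refine sum_congr rfl fun k hk => ?_
  rw [← hdesc, Nat.cast_sub (Nat.le_of_lt_succ (mem_range.mp hk))]
  ring_nf

theorem sum_choose_div_poch_mul_descFactorial {d : ℂ} (hd : ∀ n : ℕ, d ≠ -n) (r n : ℕ) :
    ∑ k ∈ range (r + 1), (r.choose k : ℂ) / poch d k * n.descFactorial k =
      poch (d + r) n / poch d n := by
  have hdr := poch_ne_zero hd r
  calc ∑ k ∈ range (r + 1), (r.choose k : ℂ) / poch d k * n.descFactorial k
      = (∑ k ∈ range (r + 1), (r.choose k : ℂ) *
          ((descPochhammer ℂ k).eval (n : ℂ) * poch (d + k) (r - k))) / poch d r := by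
        rw [sum_div]
        refine sum_congr rfl fun k hk => ?_
        have hsplit : poch d r = poch d k * poch (d + k) (r - k) := by
          rw [poch_mul_poch_add, Nat.add_sub_cancel' (Nat.le_of_lt_succ (mem_range.mp hk))]
        have hdk := poch_ne_zero hd k
        have hdkr : poch (d + k) (r - k) ≠ 0 := right_ne_zero_of_mul (hsplit ▸ hdr)
        rw [hsplit, descPochhammer_eval_eq_descFactorial]
        field_simp
    _ = poch (n + d) r / poch d r := by rw [sum_choose_mul_descPochhammer_mul_poch]
    _ = poch (d + r) n / poch d n := by
        rw [div_eq_div_iff hdr (poch_ne_zero hd n), add_comm (n : ℂ)]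
        linear_combination poch_mul_poch_add d n r - poch_mul_poch_add d r n +
          congrArg (poch d) (Nat.add_comm n r)

open PowerSeries in
theorem iterate_derivative_gauss2F1 (a b : ℂ) {c : ℂ} (hc : ∀ n : ℕ, c ≠ -n) (k : ℕ) :
    (d⁄dX ℂ)^[k] (gauss2F1 a b c) =
      C (poch a k * poch b k / poch c k) * gauss2F1 (a + k) (b + k) (c + k) := by
  ext n
  rw [coeff_iterate_derivative, coeff_C_mul, gauss2F1, gauss2F1,
    coeff_mk, coeff_mk, ← Nat.factorial_mul_ascFactorial, add_comm n k,
    ← poch_mul_poch_add a, ← poch_mul_poch_add b, ← poch_mul_poch_add c]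
  have hck := poch_ne_zero hc k
  have hckn : poch (c + k) n ≠ 0 :=
    right_ne_zero_of_mul (poch_mul_poch_add c k n ▸ poch_ne_zero hc (k + n))
  have hasc : ((n + 1).ascFactorial k : ℂ) ≠ 0 := by exact_mod_cast (Nat.ascFactorial_pos n k).ne'
  push_cast
  field_simp

open PowerSeries in
theorem finite_sum_2F1_denominator (r : ℕ) (a b c : ℂ)
    (hc : ∀ n : ℕ, c ≠ -(n : ℂ)) (hcr : ∀ n : ℕ, c - r ≠ -(n : ℂ)) :
    ∑ k ∈ Finset.range (r + 1),
      PowerSeries.C ((r.choose k : ℂ) * (poch a k * poch b k) /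
          (poch (c - r) k * poch c k)) *
        (PowerSeries.X : PowerSeries ℂ) ^ k * gauss2F1 (a + k) (b + k) (c + k) =
    gauss2F1 a b (c - r) := by
  have hterm (k : ℕ) :
      C ((r.choose k : ℂ) * (poch a k * poch b k) / (poch (c - r) k * poch c k)) * X ^ k *
          gauss2F1 (a + k) (b + k) (c + k) =
        C ((r.choose k : ℂ) / poch (c - r) k) * (X ^ k * (d⁄dX ℂ)^[k] (gauss2F1 a b c)) := by
    rw [iterate_derivative_gauss2F1 a b hc, mul_div_mul_comm, map_mul]
    ring
  simp only [hterm]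
  ext n
  simp only [map_sum, coeff_C_mul, coeff_X_pow_mul_iterate_derivative]
  simp only [← mul_assoc]
  rw [← sum_mul, sum_choose_div_poch_mul_descFactorial hcr, sub_add_cancel]
  simp only [gauss2F1, coeff_mk]
  have hcn := poch_ne_zero hc n
  have hcrn := poch_ne_zero hcr n
  field_simp
end

section
/- For all nonnegative integers r, s and every complex number a such that a ≠ 0, (a−r+1)_k ≠ 0 for 0 ≤ k ≤ r, and (1−a)_s ≠ 0, one has Σ_{k=0}^{r} (−r)_k (1+k)_s / ((a−r+1)_k · s!) = ((a−r)/a) · (1−a+r)_s / (1−a)_s. -/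
open Finset Polynomial Nat

theorem descPochhammer_eval_eq_smeval {R : Type*} [CommRing R] (x : R) (n : ℕ) :
    (descPochhammer R n).eval x = (descPochhammer ℤ n).smeval x := by
  rw [← descPochhammer_map (algebraMap ℤ R), eval_map_algebraMap, aeval_eq_smeval]

theorem descPochhammer_eval_add {R : Type*} [CommRing R] (x y : R) (n : ℕ) :
    (descPochhammer R n).eval (x + y) = ∑ k ∈ range (n + 1),
      n.choose k * ((descPochhammer R k).eval x * (descPochhammer R (n - k)).eval y) := by
  simp only [descPochhammer_eval_eq_smeval]
  rw [Ring.descPochhammer_smeval_add n (Commute.all x y),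
    Nat.sum_antidiagonal_eq_sum_range_succ_mk]

theorem poch_one (x : ℂ) : poch x 1 = x := by
  simp [poch]

theorem poch_add (x : ℂ) (m n : ℕ) : poch x (m + n) = poch x m * poch (x + m) n := by
  simpa [poch, eval_comp] using (congrArg (eval x) (ascPochhammer_mul ℂ m n)).symm

theorem poch_mul_poch_add_comm (x : ℂ) (m n : ℕ) :
    poch x m * poch (x + m) n = poch x n * poch (x + n) m := by
  rw [← poch_add, ← poch_add, add_comm]

theorem mul_poch_add_one (x : ℂ) (n : ℕ) : x * poch (x + 1) n = poch x n * (x + n) := by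
  simpa [poch_one] using poch_mul_poch_add_comm x 1 n

theorem poch_eq_descPochhammer_eval (x : ℂ) (n : ℕ) :
    poch x n = (descPochhammer ℂ n).eval (x + n - 1) := by
  rw [descPochhammer_eval_eq_ascPochhammer, poch]
  ring_nf

theorem poch_eq_neg_one_pow_mul_descPochhammer_eval (x : ℂ) (n : ℕ) :
    poch x n = (-1) ^ n * (descPochhammer ℂ n).eval (-x) := by
  rw [poch, ← ascPochhammer_eval_neg_eq_descPochhammer, neg_neg]

theorem poch_one_sub (x : ℂ) (n : ℕ) : poch (1 - x) n = (-1) ^ n * poch (x - n) n := by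
  rw [poch_eq_neg_one_pow_mul_descPochhammer_eval, poch_eq_descPochhammer_eval]
  ring_nf

theorem poch_neg_natCast (n k : ℕ) : poch (-n) k = (-1) ^ k * k ! * n.choose k := by
  rw [poch, ascPochhammer_eval_neg_eq_descPochhammer, descPochhammer_eval_eq_descFactorial,
    descFactorial_eq_factorial_mul_choose]
  push_cast
  ring

theorem poch_one_add_natCast_mul_factorial (k s : ℕ) : poch (1 + k) s * k ! = (k + s)! := by
  rw [poch, mul_comm, add_comm]
  exact_mod_cast factorial_mul_ascPochhammer ℂ k s

theorem poch_one_add_natCast_div_factorial (k s : ℕ) :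
    poch (1 + k) s / s ! = poch (1 + s) k / k ! := by
  rw [div_eq_div_iff (mod_cast s.factorial_ne_zero) (mod_cast k.factorial_ne_zero),
    poch_one_add_natCast_mul_factorial, poch_one_add_natCast_mul_factorial, add_comm]

theorem poch_sub_eq_sum (n : ℕ) (b c : ℂ) :
    poch (c - b) n = ∑ k ∈ range (n + 1), poch (-n) k * poch b k / k ! * poch (c + k) (n - k) := by
  rw [poch_eq_descPochhammer_eval, show c - b + n - 1 = -b + (c + n - 1) by ring,
    descPochhammer_eval_add]
  refine sum_congr rfl fun k hk => ?_
  rw [poch_neg_natCast, poch_eq_neg_one_pow_mul_descPochhammer_eval b,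
    poch_eq_descPochhammer_eval (c + k), Nat.cast_sub (Nat.lt_succ_iff.mp (mem_range.mp hk)),
    show c + k + (n - k : ℂ) - 1 = c + n - 1 by ring]
  have hk : (k ! : ℂ) ≠ 0 := mod_cast k.factorial_ne_zero
  have hsign : ((-1 : ℂ) ^ k) * (-1) ^ k = 1 := by rw [← mul_pow]; norm_num
  field_simp
  linear_combination
    -(n.choose k * (descPochhammer ℂ k).eval (-b) * (descPochhammer ℂ (n - k)).eval (c + n - 1))
      * hsign

theorem sum_poch_div_eq_poch_sub_div (n : ℕ) (b c : ℂ) (hc : poch c n ≠ 0) :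
    ∑ k ∈ range (n + 1), poch (-n) k * poch b k / (poch c k * k !) =
      poch (c - b) n / poch c n := by
  rw [eq_div_iff hc, sum_mul, poch_sub_eq_sum]
  refine sum_congr rfl fun k hk => ?_
  have hsplit : poch c n = poch c k * poch (c + k) (n - k) := by
    rw [← poch_add, Nat.add_sub_cancel' (Nat.lt_succ_iff.mp (mem_range.mp hk))]
  have hck : poch c k ≠ 0 := left_ne_zero_of_mul (hsplit ▸ hc)
  rw [hsplit]
  field_simp

theorem poch_div_poch_eq (a : ℂ) (r s : ℕ) (ha : a ≠ 0) (hr : poch (a - r + 1) r ≠ 0)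
    (hs : poch (1 - a) s ≠ 0) :
    poch (a - r - s) r / poch (a - r + 1) r =
      (a - r) / a * (poch (1 - a + r) s / poch (1 - a) s) := by
  rw [poch_one_sub] at hs
  rw [show 1 - a + r = 1 - (a - r) by ring, poch_one_sub, poch_one_sub]
  have hsign : ((-1 : ℂ) ^ s) ≠ 0 := pow_ne_zero s (by norm_num)
  have hs' : poch (a - s) s ≠ 0 := right_ne_zero_of_mul hs
  have hcomm := poch_mul_poch_add_comm (a - r - s) r s
  rw [show a - r - s + r = a - s by ring, show a - r - s + s = a - r by ring] at hcomm
  have hsucc := mul_poch_add_one (a - r) r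
  rw [show a - r + r = a by ring] at hsucc
  field_simp
  linear_combination a * hcomm - poch (a - r - s) s * hsucc

theorem finite_sum_inverse_argument (r s : ℕ) (a : ℂ) (ha : a ≠ 0)
    (h1 : ∀ k ≤ r, poch (a - r + 1) k ≠ 0) (h2 : poch (1 - a) s ≠ 0) :
    ∑ k ∈ Finset.range (r + 1),
      poch (-(r : ℂ)) k * poch (1 + k) s / (poch (a - r + 1) k * (s.factorial : ℂ)) =
    ((a - r) / a) * (poch (1 - a + r) s / poch (1 - a) s) := by
  have hr : poch (a - r + 1) r ≠ 0 := h1 r le_rfl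
  calc _ = ∑ k ∈ range (r + 1), poch (-r) k * poch (1 + s) k / (poch (a - r + 1) k * k !) := by
        refine sum_congr rfl fun k _ => ?_
        calc _ = poch (-r) k / poch (a - r + 1) k * (poch (1 + k) s / s !) := by ring
          _ = _ := by rw [poch_one_add_natCast_div_factorial]; ring
    _ = poch (a - r - s) r / poch (a - r + 1) r := by
        rw [sum_poch_div_eq_poch_sub_div r _ _ hr, show a - r + 1 - (1 + s) = a - r - s by ring]
    _ = _ := poch_div_poch_eq a r s ha hr h2
end

section
/- For every integer r ≥ 1 and every nonnegative integer s, one has Σ_{k=0}^{r} (−r)_k (1+k)_s / ((1−2r)_k · s!) = 2 · (1+2r)_s / (1+r)_s, where (−r)_k/(1−2r)_k is interpreted as the product Π_{j=0}^{k−1} (−r+j)/(1−2r+j), which is well defined for 0 ≤ k ≤ r. -/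
open Finset Nat

lemma Ring.choose_neg_natCast_add_one (a i : ℕ) :
    Ring.choose (-((a : ℤ) + 1)) i = (-1) ^ i * (a + i).choose i := by
  rw [Ring.choose_neg, show (a : ℤ) + 1 + i - 1 = ((a + i : ℕ) : ℤ) by push_cast; ring,
    Ring.choose_natCast, Units.smul_def, Int.coe_negOnePow_natCast, smul_eq_mul]

theorem Nat.sum_antidiagonal_add_choose_mul_add_choose (a b n : ℕ) :
    ∑ ij ∈ antidiagonal n, (a + ij.1).choose ij.1 * (b + ij.2).choose ij.2 =
      (a + b + 1 + n).choose n := by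
  have h := Ring.add_choose_eq n (Commute.all (-((a : ℤ) + 1)) (-((b : ℤ) + 1)))
  rw [show -((a : ℤ) + 1) + -((b : ℤ) + 1) = -(((a + b + 1 : ℕ) : ℤ) + 1) by push_cast; ring,
    Ring.choose_neg_natCast_add_one] at h
  have hsign : ∀ ij ∈ antidiagonal n,
      Ring.choose (-((a : ℤ) + 1)) ij.1 * Ring.choose (-((b : ℤ) + 1)) ij.2 =
        (-1) ^ n * ((a + ij.1).choose ij.1 * (b + ij.2).choose ij.2 : ℕ) := by
    intro ij hij
    rw [← mem_antidiagonal.mp hij, Ring.choose_neg_natCast_add_one,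
      Ring.choose_neg_natCast_add_one]
    push_cast
    ring
  rw [sum_congr rfl hsign, ← mul_sum, mul_right_inj' (pow_ne_zero n (by norm_num))] at h
  exact_mod_cast h.symm

lemma prod_range_neg_natCast_add {R : Type*} [CommRing R] (m k : ℕ) :
    ∏ j ∈ range k, (-(m : R) + j) = (-1) ^ k * m.descFactorial k := by
  rw [← descPochhammer_eval_eq_descFactorial, descPochhammer_eval_eq_prod_range]
  calc ∏ j ∈ range k, (-(m : R) + j) = ∏ j ∈ range k, -((m : R) - j) :=
        prod_congr rfl fun j _ => by ring
    _ = (-1) ^ k * ∏ j ∈ range k, ((m : R) - j) := by rw [prod_neg, card_range]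

lemma prod_range_neg_natCast_add_div {K : Type*} [Field K] (m n k : ℕ) :
    ∏ j ∈ range k, ((-(m : K) + j) / (-(n : K) + j)) = m.descFactorial k / n.descFactorial k := by
  rw [prod_div_distrib, prod_range_neg_natCast_add, prod_range_neg_natCast_add,
    mul_div_mul_left _ _ (pow_ne_zero k (by norm_num))]

theorem Nat.descFactorial_mul_choose {m n k : ℕ} (hkm : k ≤ m) :
    m.descFactorial k * n.choose m = n.descFactorial k * (n - k).choose (m - k) := by
  rw [descFactorial_eq_factorial_mul_choose, descFactorial_eq_factorial_mul_choose, mul_assoc,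
    mul_assoc, mul_comm (m.choose k), choose_mul hkm]

theorem Nat.cast_descFactorial_div_descFactorial (K : Type*) [Field K] [CharZero K] {m n k : ℕ}
    (hkm : k ≤ m) (hmn : m ≤ n) :
    (m.descFactorial k : K) / n.descFactorial k = (n - k).choose (m - k) / n.choose m := by
  rw [div_eq_div_iff (by exact_mod_cast (descFactorial_pos.mpr (hkm.trans hmn)).ne')
    (by exact_mod_cast (choose_pos hmn).ne')]
  exact_mod_cast (descFactorial_mul_choose (n := n) hkm).trans (mul_comm _ _)

theorem Nat.choose_two_mul_self {r : ℕ} (hr : 0 < r) :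
    (2 * r).choose r = 2 * (2 * r - 1).choose r := by
  obtain ⟨m, rfl⟩ : ∃ m, r = m + 1 := ⟨r - 1, by omega⟩
  rw [show 2 * (m + 1) = 2 * m + 1 + 1 by ring, add_tsub_cancel_right, choose_succ_succ,
    ← choose_symm_half]
  ring

lemma poch_one_add_natCast (n s : ℕ) : poch (1 + n) s = s ! * (n + s).choose n := by
  rw [poch, add_comm, ← Nat.cast_add_one, ascPochhammer_nat_eq_natCast_ascFactorial,
    ascFactorial_eq_factorial_mul_choose, choose_symm_add]
  push_cast
  rfl

lemma prod_range_neg_div_one_sub_two_mul {r k : ℕ} (hr : 1 ≤ r) (hkr : k ≤ r) :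
    ∏ j ∈ range k, ((-(r : ℂ) + j) / (1 - 2 * r + j)) =
      ((r - 1 + (r - k)).choose (r - k) : ℂ) / (2 * r - 1).choose r := by
  have hden (j : ℕ) : (1 - 2 * r + j : ℂ) = -((2 * r - 1 : ℕ) : ℂ) + j := by
    push_cast [Nat.cast_sub (by omega : 1 ≤ 2 * r)]
    ring
  simp_rw [hden, prod_range_neg_natCast_add_div,
    cast_descFactorial_div_descFactorial ℂ hkr (by omega : r ≤ 2 * r - 1),
    show 2 * r - 1 - k = r - 1 + (r - k) by omega]

lemma two_mul_poch_div_poch_eq_choose_div_choose {r : ℕ} (hr : 1 ≤ r) (s : ℕ) :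
    2 * (poch (1 + 2 * r) s / poch (1 + r) s) =
      ((2 * r + s).choose r : ℂ) / (2 * r - 1).choose r := by
  have hbinom : ((2 * r + s).choose r * (r + s).choose r : ℂ) =
      (2 * r + s).choose (2 * r) * (2 * (2 * r - 1).choose r) := by
    norm_cast
    rw [← choose_two_mul_self hr, choose_mul (by omega : r ≤ 2 * r),
      show 2 * r + s - r = r + s by omega, show 2 * r - r = r by omega]
  have hs : (s ! : ℂ) ≠ 0 := mod_cast s.factorial_ne_zero
  have h1 : ((2 * r - 1).choose r : ℂ) ≠ 0 := mod_cast (choose_pos (by omega)).ne'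
  have h2 : ((r + s).choose r : ℂ) ≠ 0 := mod_cast (choose_pos (by omega)).ne'
  rw [show (2 * r : ℂ) = ((2 * r : ℕ) : ℂ) by push_cast; ring, poch_one_add_natCast,
    poch_one_add_natCast]
  field_simp
  linear_combination -hbinom

theorem finite_sum_ratio_one_minus_two_r (r s : ℕ) (hr : 1 ≤ r) :
    ∑ k ∈ Finset.range (r + 1),
      (∏ j ∈ Finset.range k, ((-(r : ℂ) + j) / (1 - 2 * r + j))) *
        poch (1 + k) s / (s.factorial : ℂ) =
    2 * (poch (1 + 2 * r) s / poch (1 + r) s) := by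
  have hs : (s ! : ℂ) ≠ 0 := mod_cast s.factorial_ne_zero
  have hterm : ∀ k ∈ range (r + 1),
      (∏ j ∈ range k, ((-(r : ℂ) + j) / (1 - 2 * r + j))) * poch (1 + k) s / (s ! : ℂ) =
        ((s + k).choose k * (r - 1 + (r - k)).choose (r - k) : ℕ) / (2 * r - 1).choose r := by
    intro k hk
    rw [prod_range_neg_div_one_sub_two_mul hr (mem_range_succ_iff.mp hk), poch_one_add_natCast,
      add_comm k s]
    field_simp
    push_cast
    ring
  rw [sum_congr rfl hterm, ← sum_div, ← Nat.cast_sum,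
    ← Nat.sum_antidiagonal_eq_sum_range_succ (fun i j => (s + i).choose i * (r - 1 + j).choose j),
    sum_antidiagonal_add_choose_mul_add_choose, show s + (r - 1) + 1 + r = 2 * r + s by omega,
    two_mul_poch_div_poch_eq_choose_div_choose hr]
end
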